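/- For a generic knot K ⊂ ℝ³ − L, the trace graph TG(K) ⊂ S¹_τ × S¹_φ × ℝ⁺_ρ is symmetric under the shift τ ↦ τ + π, and under this shift a point with homological marking [a] ∈ ℤ_{|m|} is carried to a point with homological marking [|m|−a] ∈ ℤ_{|m|}, where m = lk(K,L). -/

import Mathlib

/-!
Common setup, following T. Fiedler and V. Kurlin,
"Fiber quadrisecants in knot isotopies" (arXiv:math/0701878).

We fix the axis `L` to be the x-axis of `ℝ³ = ℝ × ℝ × ℝ` and consider the
fibration `φ : ℝ³ − L → S¹` whose fibers are the open half-planes attached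
to `L`.  Knots are smooth embeddings `S¹ → ℝ³ − L` (modelled by 1-periodic
regular smooth maps `ℝ → ℝ³` avoiding `L` and injective on a period).

For an ordered pair `(p,q)` of points of a knot `K` lying in a common fiber,
`τ(p,q)` is the angle between `L` and the oriented secant through `p` then `q`
(measured inside the plane containing the fiber, using the coordinates
`(λ, ρ)` = (position along the axis, distance from the axis)), and `ρ(p,q)`
is the distance from that secant line to the origin `0 ∈ L`.  The trace graph
`TG(K)` is the set of points `(τ(p,q), φ, ρ(p,q))` in the thickened torus
`𝕋 = S¹_τ × S¹_φ × ℝ⁺_ρ`.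

A crossing of the projection `pr_{τφ}(TG(K))` is a pair of fiber secants of
`K` lying in a common fiber, parallel to each other and at different
distances from the axis; the branch further from the axis is taken as the
overcrossing branch.  The homological marking of an ordered secant pair
`(p,q)` is the winding number around `L` of the loop which follows `K` from
the undercrossing point `p` to the overcrossing point `q` and returns along
the secant segment (which lies in a single fiber and hence does not wind).
The sign of a crossing of the trace-graph diagram is computed from the signs
of the two underlying knot-diagram crossings and the slopes `dτ/dφ` of the
two branches, according to the orientation rule of Definition 2.2 of the
paper (τ increases along a branch iff the underlying crossing sign is `+1`).

Combinatorial trace-graph diagrams (crossings with signs, markings of the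
overcrossing and undercrossing traces, and the `τ ↦ τ + π` symmetry) are
modelled by `TGDiagram`, on which the three writhes of Definition 1.3 and
the moves of Fig. 4 and Fig. 6 are defined.
-/

noncomputable section
open Real Set

namespace FQS

/-- Points of `ℝ³`, written as `(x, y, z)`. -/
abbrev Pt : Type := ℝ × ℝ × ℝ

def xc (p : Pt) : ℝ := p.1
def yc (p : Pt) : ℝ := p.2.1
def zc (p : Pt) : ℝ := p.2.2

/-- The fixed axis `L`: the x-axis of `ℝ³`. -/
def axisL : Set Pt := {p | yc p = 0 ∧ zc p = 0}

/-- Distance from the axis `L`. -/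
def rho (p : Pt) : ℝ := Real.sqrt (yc p ^ 2 + zc p ^ 2)

/-- Position along the axis `L`. -/
def lam (p : Pt) : ℝ := xc p

/-- The fibration `φ : ℝ³ − L → S¹` by half-planes attached to `L`. -/
def phiAngle (p : Pt) : AddCircle (2 * π) :=
  ((Complex.arg ((yc p : ℂ) + (zc p : ℂ) * Complex.I) : ℝ) : AddCircle (2 * π))

/-- `p` and `q` lie in a common fiber (open half-plane bounded by `L`) of `φ`. -/
def SameFiber (p q : Pt) : Prop :=
  p ∉ axisL ∧ q ∉ axisL ∧ yc p * zc q - zc p * yc q = 0 ∧ 0 < yc p * yc q + zc p * zc q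

def cross2 (u v : ℝ × ℝ) : ℝ := u.1 * v.2 - u.2 * v.1
def dot2 (u v : ℝ × ℝ) : ℝ := u.1 * v.1 + u.2 * v.2
def vsub3 (q p : Pt) : Pt := (q.1 - p.1, q.2.1 - p.2.1, q.2.2 - p.2.2)
def cross3 (u v : Pt) : Pt :=
  (yc u * zc v - zc u * yc v, zc u * xc v - xc u * zc v, xc u * yc v - yc u * xc v)
def dot3 (u v : Pt) : ℝ := xc u * xc v + yc u * yc v + zc u * zc v
def det3 (u v w : Pt) : ℝ := dot3 u (cross3 v w)

/-- The sign of a real number, as an integer. -/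
def sgn (x : ℝ) : ℤ := if 0 < x then 1 else if x < 0 then -1 else 0

/-- The straight line through two (distinct) points. -/
def lineThrough (p q : Pt) : Set Pt := {r | ∃ s : ℝ, r = p + s • (q - p)}

/-- Angular speed of `g` around the axis `L` (up to the positive factor `ρ²`):
`g` is tangent to a fiber at `t` iff `rawDang g t = 0`. -/
def rawDang (g : ℝ → Pt) (t : ℝ) : ℝ :=
  yc (g t) * deriv (fun s => zc (g s)) t - zc (g t) * deriv (fun s => yc (g s)) t

/-- A knot in `ℝ³ − L`: a 1-periodic smooth regular embedding avoiding the axis. -/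
def IsKnotMap (g : ℝ → Pt) : Prop :=
  ContDiff ℝ (⊤ : ℕ∞) g ∧ (∀ t, g (t + 1) = g t) ∧
    Set.InjOn g (Set.Ico (0 : ℝ) 1) ∧ (∀ t, deriv g t ≠ 0) ∧ ∀ t, g t ∉ axisL

structure Knot : Type where
  map : ℝ → Pt
  isKnot : IsKnotMap map

namespace Knot

variable (K : Knot)

def onK (p : Pt) : Prop := p ∈ Set.range K.map

def x (t : ℝ) : ℝ := xc (K.map t)
def r (t : ℝ) : ℝ := rho (K.map t)

/-- Angular speed of `K` around `L`; `K` is tangent to a fiber at `t` iff `K.Dang t = 0`. -/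
def Dang (t : ℝ) : ℝ := rawDang K.map t

/-- Winding number (as a real number) of `K|_{[a,b]}` around the axis `L`. -/
def wind (a b : ℝ) : ℝ := (1 / (2 * π)) * ∫ t in a..b, K.Dang t / (K.r t) ^ 2

/-- The linking number `lk(K, L)` of the knot with the axis. -/
def lkL : ℤ := round (K.wind 0 1)

/-- A parameter in `[0,1)` realizing a point of the knot (junk value `0` otherwise). -/
def param (p : Pt) : ℝ :=
  @dite _ (∃ t ∈ Set.Ico (0 : ℝ) 1, K.map t = p) (Classical.dec _)
    (fun h => h.choose) (fun _ => 0)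

/-- Parameters `(a, b)` with `b ∈ [a, a + 1)` representing the ordered pair `(p, q)`. -/
def param2 (p q : Pt) : ℝ × ℝ :=
  (K.param p, if K.param q < K.param p then K.param q + 1 else K.param q)

/-- Integer homological marking of the ordered secant pair `(p,q)`: the winding number
around `L` of the loop following `K` from the undercrossing point `p` to the
overcrossing point `q` and closed up by the secant segment inside the fiber. -/
def markInt (p q : Pt) : ℤ := round (K.wind (K.param2 p q).1 (K.param2 p q).2)

/-- Homological marking in `ℤ_{|m|}`. -/
def mark (m : ℕ) (p q : Pt) : ZMod m := (K.markInt p q : ZMod m)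

end Knot

/-- The secant vector of the ordered pair `(p,q)` in the fiber-plane coordinates `(λ, ρ)`. -/
def secVec (p q : Pt) : ℝ × ℝ := (lam q - lam p, rho q - rho p)

/-- The angle `τ(p,q) ∈ S¹` between the axis `L` and the oriented secant through `p` then `q`. -/
def tauAngle (p q : Pt) : AddCircle (2 * π) :=
  ((Complex.arg (((lam q - lam p : ℝ) : ℂ) + ((rho q - rho p : ℝ) : ℂ) * Complex.I) : ℝ) :
    AddCircle (2 * π))

/-- The distance `ρ(p,q)` from the secant line through `p, q` to the origin `0 ∈ L`. -/
def rhoLine (p q : Pt) : ℝ :=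
  |lam p * rho q - lam q * rho p| /
    Real.sqrt ((lam q - lam p) ^ 2 + (rho q - rho p) ^ 2)

/-- The thickened torus `𝕋 = S¹_τ × S¹_φ × ℝ_ρ`. -/
abbrev Torus3 : Type := AddCircle (2 * π) × AddCircle (2 * π) × ℝ

/-- The point of `𝕋` associated to an ordered secant pair `(p,q)`. -/
def TGpt (p q : Pt) : Torus3 := (tauAngle p q, phiAngle p, rhoLine p q)

/-- The trace graph `TG(K) ⊂ 𝕋`. -/
def TG (K : Knot) : Set Torus3 :=
  {x | ∃ p q : Pt, K.onK p ∧ K.onK q ∧ p ≠ q ∧ SameFiber p q ∧ x = TGpt p q}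

namespace Knot

variable (K : Knot)

/-- Determinant whose vanishing detects tangencies of the projection of `K`
along the secant through `p` then `q`. -/
def crossDet (p q : Pt) : ℝ :=
  det3 (vsub3 q p) (deriv K.map (K.param2 p q).2) (deriv K.map (K.param2 p q).1)

/-- The sign of the knot-diagram crossing given by the ordered pair `(p,q)`
(`q` overcrosses `p`) in the projection of `K` along the secant. -/
def crossSign (p q : Pt) : ℤ := sgn (K.crossDet p q)

/-- The slope `dτ/dφ` of the branch of the trace graph through the point
corresponding to the ordered secant pair `(p,q)` (up to a positive factor). -/
def tauSlope (p q : Pt) : ℝ :=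
  ((lam q - lam p) *
      (deriv K.r (K.param2 p q).2 / (K.Dang (K.param2 p q).2 / (K.r (K.param2 p q).2) ^ 2) -
        deriv K.r (K.param2 p q).1 / (K.Dang (K.param2 p q).1 / (K.r (K.param2 p q).1) ^ 2)) -
    (rho q - rho p) *
      (deriv K.x (K.param2 p q).2 / (K.Dang (K.param2 p q).2 / (K.r (K.param2 p q).2) ^ 2) -
        deriv K.x (K.param2 p q).1 / (K.Dang (K.param2 p q).1 / (K.r (K.param2 p q).1) ^ 2))) /
    ((lam q - lam p) ^ 2 + (rho q - rho p) ^ 2)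

/-- Crossings of the projection `pr_{τφ}(TG(K))`: two parallel fiber secants
`(p₁,q₁)` and `(p₂,q₂)` lying in a common fiber, the first one (the
overcrossing branch) further from the axis. -/
def CrossingSet : Set (Pt × Pt × Pt × Pt) :=
  {c | K.onK c.1 ∧ K.onK c.2.1 ∧ K.onK c.2.2.1 ∧ K.onK c.2.2.2 ∧
    c.1 ≠ c.2.1 ∧ c.2.2.1 ≠ c.2.2.2 ∧
    SameFiber c.1 c.2.1 ∧ SameFiber c.2.2.1 c.2.2.2 ∧ SameFiber c.1 c.2.2.1 ∧
    cross2 (secVec c.1 c.2.1) (secVec c.2.2.1 c.2.2.2) = 0 ∧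
    0 < dot2 (secVec c.1 c.2.1) (secVec c.2.2.1 c.2.2.2) ∧
    rhoLine c.2.2.1 c.2.2.2 < rhoLine c.1 c.2.1}

/-- The sign of a crossing of the trace-graph diagram `pr_{τφ}(TG(K))`, computed from
the oriented tangent directions of the two branches (Definition 2.2 orientation rule). -/
def crSign (c : Pt × Pt × Pt × Pt) : ℤ :=
  K.crossSign c.1 c.2.1 * K.crossSign c.2.2.1 c.2.2.2 *
    sgn (K.tauSlope c.1 c.2.1) * sgn (K.tauSlope c.2.2.1 c.2.2.2) *
    sgn (K.tauSlope c.1 c.2.1 - K.tauSlope c.2.2.1 c.2.2.2)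

/-- An ordered fiber secant pair of `K`. -/
def SecPair (pq : Pt × Pt) : Prop :=
  K.onK pq.1 ∧ K.onK pq.2 ∧ pq.1 ≠ pq.2 ∧ SameFiber pq.1 pq.2

/-- `p` is a point where `K` is tangent to a fiber of `φ`. -/
def IsFiberTangentPt (p : Pt) : Prop := ∃ t, K.map t = p ∧ K.Dang t = 0

def detPair (pq : Pt × Pt) : ℝ := K.crossDet pq.1 pq.2

end Knot

def secVecPair (pq : Pt × Pt) : ℝ × ℝ := secVec pq.1 pq.2

/-- Triple vertices of `TG(K)`: points of `𝕋` arising from fiber trisecants. -/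
def TripleVertices (K : Knot) : Set Torus3 :=
  {x | ∃ p₁ p₂ p₃ : Pt, K.onK p₁ ∧ K.onK p₂ ∧ K.onK p₃ ∧
    p₁ ≠ p₂ ∧ p₂ ≠ p₃ ∧ p₁ ≠ p₃ ∧ SameFiber p₁ p₂ ∧ SameFiber p₂ p₃ ∧
    (∃ s : ℝ, 0 < s ∧ s < 1 ∧ p₂ = p₁ + s • (p₃ - p₁)) ∧
    (x = TGpt p₁ p₂ ∨ x = TGpt p₂ p₃ ∨ x = TGpt p₁ p₃)}

namespace Knot

variable (K : Knot)

/-! The codimension-1 singularities of Definition 2.1. -/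

/-- A fiber quadrisecant: a line meeting `K` transversally in 4 points of one fiber. -/
def HasFiberQuadrisecant : Prop :=
  ∃ t₁ t₂ t₃ t₄ : ℝ,
    K.map t₁ ≠ K.map t₂ ∧ K.map t₁ ≠ K.map t₃ ∧ K.map t₁ ≠ K.map t₄ ∧
    K.map t₂ ≠ K.map t₃ ∧ K.map t₂ ≠ K.map t₄ ∧ K.map t₃ ≠ K.map t₄ ∧
    Collinear ℝ ({K.map t₁, K.map t₂, K.map t₃, K.map t₄} : Set Pt) ∧
    SameFiber (K.map t₁) (K.map t₂) ∧ SameFiber (K.map t₁) (K.map t₃) ∧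
    SameFiber (K.map t₁) (K.map t₄) ∧
    ∀ t ∈ ({t₁, t₂, t₃, t₄} : Set ℝ),
      cross3 (vsub3 (K.map t₂) (K.map t₁)) (deriv K.map t) ≠ 0

/-- A fiber trisecant through the three points `K.map t₁, K.map t₂, K.map t₃`. -/
def IsFiberTrisecant (t₁ t₂ t₃ : ℝ) : Prop :=
  K.map t₁ ≠ K.map t₂ ∧ K.map t₁ ≠ K.map t₃ ∧ K.map t₂ ≠ K.map t₃ ∧
    Collinear ℝ ({K.map t₁, K.map t₂, K.map t₃} : Set Pt) ∧
    SameFiber (K.map t₁) (K.map t₂) ∧ SameFiber (K.map t₁) (K.map t₃)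

/-- Singularity: a fiber trisecant lying in the plane spanned by the tangents of `K`
at two of its three points. -/
def HasDegenerateTrisecant : Prop :=
  ∃ t₁ t₂ t₃, K.IsFiberTrisecant t₁ t₂ t₃ ∧
    ∃ s ∈ ({t₁, t₂, t₃} : Set ℝ), ∃ s' ∈ ({t₁, t₂, t₃} : Set ℝ), K.map s ≠ K.map s' ∧
      det3 (vsub3 (K.map t₂) (K.map t₁)) (deriv K.map s) (deriv K.map s') = 0

/-- Singularity: a fiber secant tangent to `K` at one of its two points. -/
def HasTangentSecant : Prop :=
  ∃ t₁ t₂, K.map t₁ ≠ K.map t₂ ∧ SameFiber (K.map t₁) (K.map t₂) ∧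
    cross3 (vsub3 (K.map t₂) (K.map t₁)) (deriv K.map t₁) = 0

/-- Singularity: a fiber secant `(p,q)` such that `K` has a tangency of order 2 at `p`
with the plane spanned by the secant and the tangent of `K` at `q`. -/
def HasCubicSecant : Prop :=
  ∃ t₁ t₂, K.map t₁ ≠ K.map t₂ ∧ SameFiber (K.map t₁) (K.map t₂) ∧
    cross3 (vsub3 (K.map t₂) (K.map t₁)) (deriv K.map t₂) ≠ 0 ∧
    dot3 (cross3 (vsub3 (K.map t₂) (K.map t₁)) (deriv K.map t₂)) (deriv K.map t₁) = 0 ∧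
    dot3 (cross3 (vsub3 (K.map t₂) (K.map t₁)) (deriv K.map t₂))
      (deriv (deriv K.map) t₁) = 0

/-- Singularity: a fiber tangent having a tangency of order 2 with `K`
(degenerate cusp). -/
def HasDegenerateFiberTangent : Prop :=
  ∃ t, K.Dang t = 0 ∧ cross3 (deriv K.map t) (deriv (deriv K.map) t) = 0

/-- Singularity: a fiber trisecant one of whose points is a fiber tangency point of `K`. -/
def HasTangentTrisecant : Prop :=
  ∃ t₁ t₂ t₃, K.IsFiberTrisecant t₁ t₂ t₃ ∧ (K.Dang t₁ = 0 ∨ K.Dang t₂ = 0 ∨ K.Dang t₃ = 0)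

/-- Singularity: a point where `K` has a tangency of order 2 with a fiber. -/
def HasFiberInflection : Prop := ∃ t, K.Dang t = 0 ∧ deriv K.Dang t = 0

/-- Singularity: a fiber extreme secant, i.e. a fiber secant meeting `K` in two points
at which `K` is tangent to the fiber. -/
def HasFiberExtremeSecant : Prop :=
  ∃ t₁ t₂, K.map t₁ ≠ K.map t₂ ∧ SameFiber (K.map t₁) (K.map t₂) ∧
    K.Dang t₁ = 0 ∧ K.Dang t₂ = 0

/-- A generic knot: none of the codimension-1 singularities of Definition 2.1 occurs. -/
def IsGeneric : Prop :=
  ¬K.HasFiberQuadrisecant ∧ ¬K.HasDegenerateTrisecant ∧ ¬K.HasTangentSecant ∧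
    ¬K.HasCubicSecant ∧ ¬K.HasDegenerateFiberTangent ∧ ¬K.HasTangentTrisecant ∧
    ¬K.HasFiberInflection ∧ ¬K.HasFiberExtremeSecant

end Knot

/-- `l` is a fiber quadrisecant line of the (1-periodic) curve `g`. -/
def IsFiberQuadrisecantLine (g : ℝ → Pt) (l : Set Pt) : Prop :=
  ∃ t₁ t₂ t₃ t₄ : ℝ,
    g t₁ ≠ g t₂ ∧ g t₁ ≠ g t₃ ∧ g t₁ ≠ g t₄ ∧ g t₂ ≠ g t₃ ∧ g t₂ ≠ g t₄ ∧ g t₃ ≠ g t₄ ∧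
    l = lineThrough (g t₁) (g t₂) ∧ g t₃ ∈ l ∧ g t₄ ∈ l ∧
    SameFiber (g t₁) (g t₂) ∧ SameFiber (g t₁) (g t₃) ∧ SameFiber (g t₁) (g t₄) ∧
    ∀ t ∈ ({t₁, t₂, t₃, t₄} : Set ℝ), cross3 (vsub3 (g t₂) (g t₁)) (deriv g t) ≠ 0

/-- `l` is a fiber extreme secant line of `g`: a fiber secant meeting the curve in two
points at which the curve has tangencies of order 1 with the fiber. -/
def IsFiberExtremeSecantLine (g : ℝ → Pt) (l : Set Pt) : Prop :=
  ∃ t₁ t₂ : ℝ, g t₁ ≠ g t₂ ∧ l = lineThrough (g t₁) (g t₂) ∧ SameFiber (g t₁) (g t₂) ∧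
    rawDang g t₁ = 0 ∧ rawDang g t₂ = 0 ∧
    deriv (rawDang g) t₁ ≠ 0 ∧ deriv (rawDang g) t₂ ≠ 0

/-- A smooth isotopy of knots in `ℝ³ − L`. -/
structure Isotopy (K₀ K₁ : Knot) : Type where
  F : ℝ → ℝ → Pt
  smooth : ContDiff ℝ (⊤ : ℕ∞) fun st : ℝ × ℝ => F st.1 st.2
  slice : ∀ s ∈ Set.Icc (0 : ℝ) 1, IsKnotMap (F s)
  init : F 0 = K₀.map
  finl : F 1 = K₁.map

/-- The fiber quadrisecant events occurring during an isotopy. -/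
def quadEvents {K₀ K₁ : Knot} (I : Isotopy K₀ K₁) : Set (ℝ × Set Pt) :=
  {e | e.1 ∈ Set.Icc (0 : ℝ) 1 ∧ IsFiberQuadrisecantLine (I.F e.1) e.2}

/-- The fiber extreme secant events occurring during an isotopy. -/
def extremeEvents {K₀ K₁ : Knot} (I : Isotopy K₀ K₁) : Set (ℝ × Set Pt) :=
  {e | e.1 ∈ Set.Icc (0 : ℝ) 1 ∧ IsFiberExtremeSecantLine (I.F e.1) e.2}

/-- `fqs(K₀,K₁)`: the minimum number of fiber quadrisecants occurring during
all isotopies connecting `K₀` to `K₁`. -/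
def fqs (K₀ K₁ : Knot) : ℕ∞ := ⨅ I : Isotopy K₀ K₁, (quadEvents I).encard

/-- `fes(K₀,K₁)`: the minimum number of fiber extreme secants occurring during
all isotopies connecting `K₀` to `K₁`. -/
def fes (K₀ K₁ : Knot) : ℕ∞ := ⨅ I : Isotopy K₀ K₁, (extremeEvents I).encard

/-- An isotopy through closed braids: every time slice is transversal to the fibers. -/
structure BraidIsotopy (K₀ K₁ : Knot) extends Isotopy K₀ K₁ : Type where
  braid : ∀ s ∈ Set.Icc (0 : ℝ) 1, ∀ t, 0 < rawDang (toIsotopy.F s) t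

/-- The minimum number of fiber quadrisecants over isotopies through closed braids. -/
def fqsBraid (K₀ K₁ : Knot) : ℕ∞ :=
  ⨅ I : BraidIsotopy K₀ K₁, (quadEvents I.toIsotopy).encard

/-! ### Combinatorial trace-graph diagrams -/

/-- A combinatorial trace-graph diagram: the crossings of `pr_{τφ}(TG(K))`,
with their signs, the homological markings in `ℤ_{|m|}` of the overcrossing and
undercrossing traces, and the `τ ↦ τ + π` symmetry on crossings. -/
structure TGDiagram (m : ℕ) : Type 1 where
  Crossing : Type
  sign : Crossing → ℤ
  over' : Crossing → ZMod m
  under : Crossing → ZMod m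
  symm : Crossing → Crossing

namespace TGDiagram

variable {m : ℕ}

/-- The unordered writhe `W^u_{a,b}`: the sum of signs over all crossings of the
trace marked `[a]` with the trace marked `[b]`. -/
def Wu (D : TGDiagram m) (a b : ZMod m) : ℤ :=
  ∑ᶠ c ∈ {c : D.Crossing |
    (D.over' c = a ∧ D.under c = b) ∨ (D.over' c = b ∧ D.under c = a)}, D.sign c

/-- The ordered writhe `W^o_{a,b}`: the sum of signs over all crossings where the
trace marked `[a]` overcrosses the trace marked `[b]`. -/
def Wo (D : TGDiagram m) (a b : ZMod m) : ℤ :=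
  ∑ᶠ c ∈ {c : D.Crossing | D.over' c = a ∧ D.under c = b}, D.sign c

/-- The coordinated writhe `W^c_{a,a}`: the sum of signs over all self-crossings of
the trace marked `[a]`. -/
def Wc (D : TGDiagram m) (a : ZMod m) : ℤ :=
  ∑ᶠ c ∈ {c : D.Crossing | D.over' c = a ∧ D.under c = a}, D.sign c

/-- A proper trace-graph diagram: finitely many crossings, all signs `±1`, and the
fixed-point free `τ ↦ τ + π` symmetry, which preserves signs and replaces a
marking `[a]` by `[|m| − a] = −[a]`. -/
def IsProper (D : TGDiagram m) : Prop :=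
  Finite D.Crossing ∧ (∀ c, D.sign c = 1 ∨ D.sign c = -1) ∧
    (∀ c, D.symm (D.symm c) = c) ∧ (∀ c, D.symm c ≠ c) ∧
    (∀ c, D.sign (D.symm c) = D.sign c) ∧
    (∀ c, D.over' (D.symm c) = -D.over' c) ∧ (∀ c, D.under (D.symm c) = -D.under c)

theorem Wu_symm (D : TGDiagram m) (a b : ZMod m) : D.Wu a b = D.Wu b a := by
  have h : {c : D.Crossing |
      (D.over' c = a ∧ D.under c = b) ∨ (D.over' c = b ∧ D.under c = a)} =
      {c : D.Crossing |
      (D.over' c = b ∧ D.under c = a) ∨ (D.over' c = a ∧ D.under c = b)} := by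
    ext c; exact or_comm
  unfold Wu
  rw [h]

/-! Moves on trace-graph diagrams.  Each move is performed simultaneously on a small
disk `Δ` and on its image under the symmetry `τ ↦ τ + π`. -/

/-- A move inducing a bijection of crossings preserving signs and markings
(e.g. Reidemeister moves III and IV of Fig. 4, and the moves of Fig. 6 which do not
affect the crossings between traces). -/
structure Iso (D D' : TGDiagram m) : Type where
  e : D.Crossing ≃ D'.Crossing
  sign_eq : ∀ c, D'.sign (e c) = D.sign c
  over_eq : ∀ c, D'.over' (e c) = D.over' c
  under_eq : ∀ c, D'.under (e c) = D.under c

/-- A move creating (for each element of `P`) a pair of crossings between the same two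
traces, with the same markings and opposite signs (e.g. Reidemeister move II of Fig. 4
and the moves of Fig. 6 creating cancelling pairs of crossings). -/
structure PairCreation (D D' : TGDiagram m) : Type 1 where
  P : Type
  finP : Finite P
  e : D.Crossing ⊕ (P × Bool) ≃ D'.Crossing
  sign_eq : ∀ c, D'.sign (e (Sum.inl c)) = D.sign c
  over_eq : ∀ c, D'.over' (e (Sum.inl c)) = D.over' c
  under_eq : ∀ c, D'.under (e (Sum.inl c)) = D.under c
  new_sign : ∀ p : P, D'.sign (e (Sum.inr (p, true))) = -D'.sign (e (Sum.inr (p, false)))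
  new_over : ∀ p : P, D'.over' (e (Sum.inr (p, true))) = D'.over' (e (Sum.inr (p, false)))
  new_under : ∀ p : P, D'.under (e (Sum.inr (p, true))) = D'.under (e (Sum.inr (p, false)))

/-- Reidemeister move V of Fig. 4: creation of a crossing (and its symmetric copy)
involving a trace arc ending at a hanging vertex; such an arc is marked `[0]`. -/
structure AddZero (D D' : TGDiagram m) : Type where
  e : D.Crossing ⊕ Bool ≃ D'.Crossing
  sign_eq : ∀ c, D'.sign (e (Sum.inl c)) = D.sign c
  over_eq : ∀ c, D'.over' (e (Sum.inl c)) = D.over' c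
  under_eq : ∀ c, D'.under (e (Sum.inl c)) = D.under c
  new_zero : ∀ b : Bool, D'.over' (e (Sum.inr b)) = 0 ∨ D'.under (e (Sum.inr b)) = 0

/-- The tetrahedral move 6i (corresponding to a fiber quadrisecant): exactly 3 couples
of symmetric crossings are switched; at a switched crossing the overcrossing and
undercrossing traces are exchanged and the sign is reversed, all other crossings
are unaffected. -/
structure Tetra (D D' : TGDiagram m) : Type where
  e : D.Crossing ≃ D'.Crossing
  c1 : D.Crossing
  c2 : D.Crossing
  c3 : D.Crossing
  distinct :
    ({c1, c2, c3, D.symm c1, D.symm c2, D.symm c3} : Set D.Crossing).encard = 6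
  switch_sign : ∀ c ∈ ({c1, c2, c3, D.symm c1, D.symm c2, D.symm c3} : Set D.Crossing),
    D'.sign (e c) = -D.sign c
  switch_over : ∀ c ∈ ({c1, c2, c3, D.symm c1, D.symm c2, D.symm c3} : Set D.Crossing),
    D'.over' (e c) = D.under c
  switch_under : ∀ c ∈ ({c1, c2, c3, D.symm c1, D.symm c2, D.symm c3} : Set D.Crossing),
    D'.under (e c) = D.over' c
  keep_sign : ∀ c ∉ ({c1, c2, c3, D.symm c1, D.symm c2, D.symm c3} : Set D.Crossing),
    D'.sign (e c) = D.sign c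
  keep_over : ∀ c ∉ ({c1, c2, c3, D.symm c1, D.symm c2, D.symm c3} : Set D.Crossing),
    D'.over' (e c) = D.over' c
  keep_under : ∀ c ∉ ({c1, c2, c3, D.symm c1, D.symm c2, D.symm c3} : Set D.Crossing),
    D'.under (e c) = D.under c
  symm_comm : ∀ c, e (D.symm c) = D'.symm (e c)

/-- The moves 6vi and 6vii of Fig. 6: at one crossing (and at its symmetric copy) the
overcrossing arc becomes undercrossing and vice versa, while the sign of the crossing
is unchanged. -/
structure SwitchOne (D D' : TGDiagram m) : Type where
  e : D.Crossing ≃ D'.Crossing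
  c0 : D.Crossing
  sign_eq : ∀ c, D'.sign (e c) = D.sign c
  switch_over : ∀ c ∈ ({c0, D.symm c0} : Set D.Crossing), D'.over' (e c) = D.under c
  switch_under : ∀ c ∈ ({c0, D.symm c0} : Set D.Crossing), D'.under (e c) = D.over' c
  keep_over : ∀ c ∉ ({c0, D.symm c0} : Set D.Crossing), D'.over' (e c) = D.over' c
  keep_under : ∀ c ∉ ({c0, D.symm c0} : Set D.Crossing), D'.under (e c) = D.under c
  symm_comm : ∀ c, e (D.symm c) = D'.symm (e c)

/-- The moves 6ix and 6x of Fig. 6 (corresponding to fiber extreme secants), in the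
`add' direction: a self-crossing of a trace marked `[a]` (and its symmetric copy,
a self-crossing of the trace marked `[−a]`) is created. -/
structure AddSelf (D D' : TGDiagram m) (a : ZMod m) : Type where
  e : D.Crossing ⊕ Bool ≃ D'.Crossing
  sign_eq : ∀ c, D'.sign (e (Sum.inl c)) = D.sign c
  over_eq : ∀ c, D'.over' (e (Sum.inl c)) = D.over' c
  under_eq : ∀ c, D'.under (e (Sum.inl c)) = D.under c
  new_over_t : D'.over' (e (Sum.inr true)) = a
  new_under_t : D'.under (e (Sum.inr true)) = a
  new_over_f : D'.over' (e (Sum.inr false)) = -a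
  new_under_f : D'.under (e (Sum.inr false)) = -a
  new_symm : D'.symm (e (Sum.inr true)) = e (Sum.inr false)
  symm_comm : ∀ c, e (Sum.inl (D.symm c)) = D'.symm (e (Sum.inl c))

end TGDiagram

/-- A step of regular isotopy of trace graphs: one of the Reidemeister moves of
types II, III, IV, V of Fig. 4 (in either direction). -/
def RegularStep {m : ℕ} (D D' : TGDiagram m) : Prop :=
  Nonempty (TGDiagram.Iso D D') ∨
    Nonempty (TGDiagram.PairCreation D D') ∨ Nonempty (TGDiagram.PairCreation D' D) ∨
    Nonempty (TGDiagram.AddZero D D') ∨ Nonempty (TGDiagram.AddZero D' D)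

/-- A move of Fig. 6 (in either direction): the tetrahedral move 6i, the
over/under-switching moves 6vi and 6vii, the moves 6ix and 6x creating or deleting a
self-crossing of a trace, and the remaining moves (which affect the crossings between
traces only by creating or deleting cancelling pairs, or not at all). -/
def Fig6Step {m : ℕ} (D D' : TGDiagram m) : Prop :=
  Nonempty (TGDiagram.Tetra D D') ∨ Nonempty (TGDiagram.Tetra D' D) ∨
    Nonempty (TGDiagram.SwitchOne D D') ∨ Nonempty (TGDiagram.SwitchOne D' D) ∨
    (∃ a, Nonempty (TGDiagram.AddSelf D D' a) ∨ Nonempty (TGDiagram.AddSelf D' D a)) ∨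
    Nonempty (TGDiagram.PairCreation D D') ∨ Nonempty (TGDiagram.PairCreation D' D) ∨
    Nonempty (TGDiagram.Iso D D')

/-- One step in the transformation of trace graphs: a regular-isotopy move or a move
of Fig. 6, between proper (symmetric) diagrams. -/
def MoveStep {m : ℕ} (D D' : TGDiagram m) : Prop :=
  (D.IsProper ∧ D'.IsProper) ∧ (RegularStep D D' ∨ Fig6Step D D')

/-- Reversing both ordered pairs of a crossing: the `τ ↦ τ + π` symmetry. -/
def swapPairs (c : Pt × Pt × Pt × Pt) : Pt × Pt × Pt × Pt := (c.2.1, c.1, c.2.2.2, c.2.2.1)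

/-- The combinatorial trace-graph diagram of a knot `K`, with markings in `ℤ_m`. -/
def Knot.diagram (K : Knot) (m : ℕ) : TGDiagram m where
  Crossing := {c : Pt × Pt × Pt × Pt // c ∈ K.CrossingSet}
  sign c := K.crSign c.1
  over' c := K.mark m c.1.1 c.1.2.1
  under c := K.mark m c.1.2.2.1 c.1.2.2.2
  symm c :=
    @dite _ (swapPairs c.1 ∈ K.CrossingSet) (Classical.dec _)
      (fun h => ⟨swapPairs c.1, h⟩) (fun _ => c)

/-- `|W^u_{a,b}(K₀) − W^u_{a,b}(K₁)|` as a function of the unordered pair `{a,b}`. -/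
def wuDiff (K₀ K₁ : Knot) (M : ℕ) : Sym2 (ZMod M) → ℤ :=
  Sym2.lift ⟨fun a b => |(K₀.diagram M).Wu a b - (K₁.diagram M).Wu a b|,
    fun a b => by
      dsimp only
      rw [TGDiagram.Wu_symm (K₀.diagram M) a b, TGDiagram.Wu_symm (K₁.diagram M) a b]⟩

/-! Geometric traces of the trace graph. -/

/-- A trace of `TG(K)`: either a trace circle (a periodic family of fiber secants) or a
trace arc, whose endpoints are hanging vertices, i.e. degenerate pairs at fiber
tangency points of `K`. -/
structure TraceCurve (K : Knot) : Type where
  c : ℝ → Pt × Pt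
  cont : Continuous c
  circleOrArc :
    ((∀ s, K.SecPair (c s)) ∧ ∃ T > 0, ∀ s, c (s + T) = c s) ∨
      ((∀ s ∈ Set.Ioo (0 : ℝ) 1, K.SecPair (c s)) ∧ (c 0).1 = (c 0).2 ∧ (c 1).1 = (c 1).2 ∧
        K.IsFiberTangentPt (c 0).1 ∧ K.IsFiberTangentPt (c 1).1)

/-- The subset of the trace graph swept by a trace. -/
def TraceCurve.image {K : Knot} (tr : TraceCurve K) : Set Torus3 :=
  {x | ∃ s, K.SecPair (tr.c s) ∧ x = TGpt (tr.c s).1 (tr.c s).2}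

/-- The orientation rule of Definition 2.2 for a parametrized trace: the angle `τ`
strictly increases along the trace where the underlying crossing sign is `+1` and
strictly decreases where it is `−1`; the angular velocity of the secant direction
vanishes exactly at the tangent vertices. -/
def OrientedTrace {K : Knot} (tr : TraceCurve K) : Prop :=
  ∀ s, K.SecPair (tr.c s) →
    0 ≤ (K.crossSign (tr.c s).1 (tr.c s).2 : ℝ) *
        cross2 (secVecPair (tr.c s)) (deriv (fun u => secVecPair (tr.c u)) s) ∧
      (cross2 (secVecPair (tr.c s)) (deriv (fun u => secVecPair (tr.c u)) s) = 0 ↔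
        K.detPair (tr.c s) = 0)

/-! Plat and closed-braid positions. -/

/-- `p` lies in the open sector of fiber angles `(α, β)`. -/
def inSector (p : Pt) (α β : ℝ) : Prop :=
  ∃ φ ∈ Set.Ioo α β, yc p = rho p * Real.cos φ ∧ zc p = rho p * Real.sin φ

namespace Knot

variable (K : Knot)

/-- A crossing of the annular diagram of `K` (projection along `ρ`): two points of `K`
in a common fiber with the same coordinate along the axis, ordered by distance
from the axis. -/
def VerticalCrossing (pq : Pt × Pt) : Prop :=
  K.onK pq.1 ∧ K.onK pq.2 ∧ pq.1 ≠ pq.2 ∧ SameFiber pq.1 pq.2 ∧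
    xc pq.1 = xc pq.2 ∧ rho pq.1 < rho pq.2

/-- The index of the strand through `p`: the number of strands of `K` in the fiber of
`p` which are closer to the bottom (smaller coordinate along the axis). -/
def strandIndex (p : Pt) : ℕ := {r : Pt | K.onK r ∧ SameFiber r p ∧ xc r < xc p}.ncard

end Knot

/-- `K` is in plat position with respect to the word `w` in the generators
`σ₁^{±1}, …, σ_{2n}^{±1}` of the braid group `B_{2n+1}`: the circle of fiber angles is
divided into `l + 2n` sectors (`l = w.length`), each containing exactly one crossing
of the diagram (matching the corresponding letter of `w`) or exactly one fiber
tangency (local extremum). -/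
def PlatPresentation (K : Knot) (n : ℕ) (w : List (Fin (2 * n) × Bool)) : Prop :=
  ∃ θ : Fin (w.length + 2 * n + 1) → ℝ,
    StrictMono θ ∧ θ (Fin.last (w.length + 2 * n)) = θ 0 + 2 * π ∧
    (∀ j : Fin (w.length + 2 * n),
      if h : (j : ℕ) < w.length then
        (∃! pq : Pt × Pt, K.VerticalCrossing pq ∧ inSector pq.1 (θ j.castSucc) (θ j.succ)) ∧
        (∀ pq : Pt × Pt, K.VerticalCrossing pq → inSector pq.1 (θ j.castSucc) (θ j.succ) →
          K.strandIndex pq.1 = ((w.get ⟨(j : ℕ), h⟩).1 : ℕ) ∧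
            ((w.get ⟨(j : ℕ), h⟩).2 = true ↔ K.crossSign pq.1 pq.2 = 1)) ∧
        (∀ t ∈ Set.Ico (0 : ℝ) 1, K.Dang t = 0 →
          ¬inSector (K.map t) (θ j.castSucc) (θ j.succ))
      else
        (∃! t : ℝ, t ∈ Set.Ico (0 : ℝ) 1 ∧ K.Dang t = 0 ∧
          inSector (K.map t) (θ j.castSucc) (θ j.succ)) ∧
        (∀ pq : Pt × Pt, K.VerticalCrossing pq →
          ¬inSector pq.1 (θ j.castSucc) (θ j.succ))) ∧
    (∀ pq : Pt × Pt, K.VerticalCrossing pq →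
      ∃ j : Fin (w.length + 2 * n), inSector pq.1 (θ j.castSucc) (θ j.succ)) ∧
    (∀ t ∈ Set.Ico (0 : ℝ) 1, K.Dang t = 0 →
      ∃ j : Fin (w.length + 2 * n), inSector (K.map t) (θ j.castSucc) (θ j.succ))

/-- `K` is the closed braid on `ns` strands around the axis `L` determined by the braid
word `w` in the generators `σ₁^{±1}, …, σ_{ns−1}^{±1}`: `K` is transversal to all
fibers, meets every fiber in exactly `ns` points, and the circle of fiber angles is
divided into `w.length` sectors each containing exactly one crossing of the annular
diagram, matching the corresponding letter of `w`. -/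
def ClosedBraidPresentation (K : Knot) (ns : ℕ) (w : List (Fin (ns - 1) × Bool)) : Prop :=
  (∀ t, 0 < K.Dang t) ∧
    (∀ p : Pt, p ∉ axisL → {q : Pt | K.onK q ∧ SameFiber q p}.ncard = ns) ∧
    ∃ θ : Fin (w.length + 1) → ℝ,
      StrictMono θ ∧ θ (Fin.last w.length) = θ 0 + 2 * π ∧
      (∀ j : Fin w.length,
        (∃! pq : Pt × Pt, K.VerticalCrossing pq ∧ inSector pq.1 (θ j.castSucc) (θ j.succ)) ∧
        (∀ pq : Pt × Pt, K.VerticalCrossing pq → inSector pq.1 (θ j.castSucc) (θ j.succ) →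
          K.strandIndex pq.1 = ((w.get j).1 : ℕ) ∧
            ((w.get j).2 = true ↔ K.crossSign pq.1 pq.2 = 1))) ∧
      (∀ pq : Pt × Pt, K.VerticalCrossing pq →
        ∃ j : Fin w.length, inSector pq.1 (θ j.castSucc) (θ j.succ))


/-!
Reversing a secant negates its direction vector in the fiber plane, which turns `τ` by `π` and
fixes `φ` and `ρ`. If `p = K(a)` and `q = K(b)` with `a < b < a + 1`, the arcs of `K` from `p` to
`q` and from `q` back to `p` make up the whole knot, so their winding numbers around `L` add up
to `lk(K, L)`. Each of them is an integer: projecting `K` to the plane orthogonal to `L` gives a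
curve `c` in `ℂ ∖ 0` with `c(b) / c(a) > 0` when `p, q` lie in one fiber, and
`c(b) = c(a) · exp ∫ₐᵇ c'/c` forces `Im ∫ₐᵇ c'/c ∈ 2πℤ`.
-/

open Complex in
theorem eq_mul_exp_integral_div {c c' : ℝ → ℂ} (hc : ∀ t, HasDerivAt c (c' t) t)
    (hc' : Continuous c') (hc0 : ∀ t, c t ≠ 0) (a b : ℝ) :
    c b = c a * exp (∫ t in a..b, c' t / c t) := by
  have hcont : Continuous (fun t => c' t / c t) :=
    hc'.div (continuous_iff_continuousAt.mpr fun t => (hc t).continuousAt) hc0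
  set F : ℝ → ℂ := fun u => ∫ t in a..u, c' t / c t
  have hF : ∀ u, HasDerivAt F (c' u / c u) u := fun u =>
    (hcont.integral_hasStrictDerivAt a u).hasDerivAt
  have hconst : ∀ u, HasDerivAt (fun u => c u * exp (-F u)) 0 u := by
    intro u
    refine ((hc u).mul (hF u).neg.cexp).congr_deriv ?_
    field_simp [hc0 u]
    ring
  have key := is_const_of_deriv_eq_zero (fun u => (hconst u).differentiableAt)
    (fun u => (hconst u).deriv) b a
  simp only [F, intervalIntegral.integral_same, neg_zero, Complex.exp_zero, mul_one] at key
  rw [← key, mul_assoc, ← Complex.exp_add, neg_add_cancel, Complex.exp_zero, mul_one]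

open Complex in
theorem exists_int_integral_im_div_eq {c c' : ℝ → ℂ} (hc : ∀ t, HasDerivAt c (c' t) t)
    (hc' : Continuous c') (hc0 : ∀ t, c t ≠ 0) {a b r : ℝ} (hr : 0 < r) (hab : c b = r * c a) :
    ∃ n : ℤ, ∫ t in a..b, (c' t / c t).im = n * (2 * π) := by
  have hexp : exp (∫ t in a..b, c' t / c t) = exp (Real.log r : ℂ) := by
    apply mul_left_cancel₀ (hc0 a)
    rw [← eq_mul_exp_integral_div hc hc' hc0, hab, ← ofReal_exp, Real.exp_log hr, mul_comm]
  obtain ⟨n, hn⟩ := exp_eq_exp_iff_exists_int.mp hexp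
  have hint : IntervalIntegrable (fun t => c' t / c t) MeasureTheory.volume a b :=
    (hc'.div (continuous_iff_continuousAt.mpr fun t => (hc t).continuousAt) hc0).intervalIntegrable
      a b
  have him := imCLM.intervalIntegral_comp_comm hint
  simp only [imCLM_apply] at him
  exact ⟨n, by simp [him, hn]⟩

theorem _root_.Function.Periodic.deriv {𝕜 F : Type*} [NontriviallyNormedField 𝕜]
    [NormedAddCommGroup F] [NormedSpace 𝕜 F] {f : 𝕜 → F} {c : 𝕜} (hf : Function.Periodic f c) :
    Function.Periodic (deriv f) c := fun x => by
  rw [← deriv_comp_add_const, hf.funext]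

def yzProj (p : Pt) : ℂ := yc p + zc p * Complex.I

lemma norm_yzProj (p : Pt) : ‖yzProj p‖ = rho p := Complex.norm_add_mul_I _ _

lemma yzProj_ne_zero {p : Pt} (hp : p ∉ axisL) : yzProj p ≠ 0 := by
  intro h
  exact hp ⟨by simpa [yzProj] using congrArg Complex.re h,
    by simpa [yzProj] using congrArg Complex.im h⟩

lemma rho_pos {p : Pt} (hp : p ∉ axisL) : 0 < rho p := by
  rw [← norm_yzProj]
  exact norm_pos_iff.mpr (yzProj_ne_zero hp)

namespace SameFiber

variable {p q : Pt}

lemma symm (h : SameFiber p q) : SameFiber q p :=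
  ⟨h.2.1, h.1, by linear_combination -h.2.2.1, by linarith [h.2.2.2]⟩

lemma exists_pos_mul (h : SameFiber p q) : ∃ r : ℝ, 0 < r ∧ yzProj q = r * yzProj p := by
  obtain ⟨hp, -, hcross, hdot⟩ := h
  have hp2 : 0 < yc p ^ 2 + zc p ^ 2 := by
    have := rho_pos hp
    rwa [rho, Real.sqrt_pos] at this
  refine ⟨(yc p * yc q + zc p * zc q) / (yc p ^ 2 + zc p ^ 2), by positivity, ?_⟩
  apply Complex.ext <;>
    simp only [yzProj, Complex.add_re, Complex.add_im, Complex.mul_re, Complex.mul_im,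
      Complex.ofReal_re, Complex.ofReal_im, Complex.I_re, Complex.I_im] <;>
    field_simp
  · linear_combination (-zc p) * hcross
  · linear_combination yc p * hcross

lemma phiAngle_eq (h : SameFiber p q) : phiAngle q = phiAngle p := by
  obtain ⟨r, hr, hrq⟩ := h.exists_pos_mul
  change ((yzProj q).arg : AddCircle (2 * π)) = (yzProj p).arg
  rw [hrq, Complex.arg_real_mul _ hr]

lemma eq_of_lam_eq_of_rho_eq (h : SameFiber p q) (hlam : lam p = lam q) (hrho : rho p = rho q) :
    p = q := by
  obtain ⟨r, hr, hrq⟩ := h.exists_pos_mul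
  have hr1 : r = 1 := by
    have hnorm := congrArg norm hrq
    rw [norm_mul, Complex.norm_real, Real.norm_of_nonneg hr.le, norm_yzProj, norm_yzProj,
      ← hrho] at hnorm
    exact (mul_eq_right₀ (rho_pos h.1).ne').mp hnorm.symm
  rw [hr1, Complex.ofReal_one, one_mul] at hrq
  have hy : yc q = yc p := by simpa [yzProj] using congrArg Complex.re hrq
  have hz : zc q = zc p := by simpa [yzProj] using congrArg Complex.im hrq
  exact Prod.ext hlam (Prod.ext hy.symm hz.symm)

end SameFiber

lemma tauAngle_swap {p q : Pt} (hpq : lam p ≠ lam q ∨ rho p ≠ rho q) :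
    tauAngle q p = tauAngle p q + ((π : ℝ) : AddCircle (2 * π)) := by
  have hne : ((lam q - lam p : ℝ) : ℂ) + ((rho q - rho p : ℝ) : ℂ) * Complex.I ≠ 0 := by
    rw [Ne, Complex.ext_iff]
    simp only [Complex.add_re, Complex.add_im, Complex.ofReal_re, Complex.ofReal_im,
      Complex.mul_re, Complex.mul_im, Complex.I_re, Complex.I_im, Complex.zero_re, Complex.zero_im]
    intro h
    rcases hpq with h' | h' <;> apply h' <;> linarith [h.1, h.2]
  have hneg : ((lam p - lam q : ℝ) : ℂ) + ((rho p - rho q : ℝ) : ℂ) * Complex.I =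
      -(((lam q - lam p : ℝ) : ℂ) + ((rho q - rho p : ℝ) : ℂ) * Complex.I) := by
    push_cast
    ring
  unfold tauAngle
  rw [hneg]
  exact Complex.arg_neg_coe_angle hne

lemma rhoLine_comm (p q : Pt) : rhoLine q p = rhoLine p q := by
  unfold rhoLine
  rw [abs_sub_comm]
  congr 2
  ring

lemma SameFiber.TGpt_swap {p q : Pt} (h : SameFiber p q) (hne : p ≠ q) :
    TGpt q p = (tauAngle p q + ((π : ℝ) : AddCircle (2 * π)), phiAngle p, rhoLine p q) := by
  have hpq : lam p ≠ lam q ∨ rho p ≠ rho q := by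
    by_contra! hcon
    exact hne (h.eq_of_lam_eq_of_rho_eq hcon.1 hcon.2)
  rw [TGpt, tauAngle_swap hpq, h.phiAngle_eq, rhoLine_comm]

lemma image_shift_TG (K : Knot) :
    (fun x : Torus3 => (x.1 + ((π : ℝ) : AddCircle (2 * π)), x.2.1, x.2.2)) '' TG K = TG K := by
  ext x
  constructor
  · rintro ⟨_, ⟨p, q, hp, hq, hne, h, rfl⟩, rfl⟩
    exact ⟨q, p, hq, hp, hne.symm, h.symm, (h.TGpt_swap hne).symm⟩
  · rintro ⟨p, q, hp, hq, hne, h, rfl⟩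
    exact ⟨TGpt q p, ⟨q, p, hq, hp, hne.symm, h.symm, rfl⟩, (h.symm.TGpt_swap hne.symm).symm⟩

namespace Knot

variable (K : Knot)

lemma periodic_map : Function.Periodic K.map 1 := K.isKnot.2.1

lemma map_notMem_axisL (t : ℝ) : K.map t ∉ axisL := K.isKnot.2.2.2.2 t

lemma contDiff_yc : ContDiff ℝ (⊤ : ℕ∞) (fun t => yc (K.map t)) := K.isKnot.1.snd.fst

lemma contDiff_zc : ContDiff ℝ (⊤ : ℕ∞) (fun t => zc (K.map t)) := K.isKnot.1.snd.snd

def yzVel (t : ℝ) : ℂ :=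
  deriv (fun s => yc (K.map s)) t + deriv (fun s => zc (K.map s)) t * Complex.I

lemma hasDerivAt_yzProj_map (t : ℝ) : HasDerivAt (fun s => yzProj (K.map s)) (K.yzVel t) t :=
  ((K.contDiff_yc.differentiable (by simp) t).hasDerivAt.ofReal_comp).add
    ((K.contDiff_zc.differentiable (by simp) t).hasDerivAt.ofReal_comp.mul_const Complex.I)

lemma continuous_yzVel : Continuous K.yzVel :=
  (Complex.continuous_ofReal.comp (K.contDiff_yc.continuous_deriv (by simp))).add
    ((Complex.continuous_ofReal.comp (K.contDiff_zc.continuous_deriv (by simp))).mul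
      continuous_const)

lemma im_yzVel_div (t : ℝ) : (K.yzVel t / yzProj (K.map t)).im = K.Dang t / K.r t ^ 2 := by
  rw [Complex.div_im, ← Complex.sq_norm, norm_yzProj]
  simp only [yzVel, yzProj, Dang, rawDang, r, Complex.add_re, Complex.add_im, Complex.mul_re,
    Complex.mul_im, Complex.ofReal_re, Complex.ofReal_im, Complex.I_re, Complex.I_im]
  ring

lemma exists_int_wind_eq {a b : ℝ} (h : SameFiber (K.map a) (K.map b)) :
    ∃ n : ℤ, K.wind a b = n := by
  obtain ⟨r, hr, hab⟩ := h.exists_pos_mul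
  obtain ⟨n, hn⟩ := exists_int_integral_im_div_eq K.hasDerivAt_yzProj_map K.continuous_yzVel
    (fun t => yzProj_ne_zero (K.map_notMem_axisL t)) hr hab
  refine ⟨n, ?_⟩
  simp_rw [wind, ← im_yzVel_div, hn]
  field_simp

lemma continuous_windDensity : Continuous fun t => K.Dang t / K.r t ^ 2 := by
  simp_rw [← K.im_yzVel_div]
  exact Complex.continuous_im.comp <| K.continuous_yzVel.div
    (continuous_iff_continuousAt.mpr fun t => (K.hasDerivAt_yzProj_map t).continuousAt)
    fun t => yzProj_ne_zero (K.map_notMem_axisL t)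

lemma periodic_windDensity : Function.Periodic (fun t => K.Dang t / K.r t ^ 2) 1 := by
  have hy : Function.Periodic (fun s => yc (K.map s)) 1 := fun s => congrArg yc (K.periodic_map s)
  have hz : Function.Periodic (fun s => zc (K.map s)) 1 := fun s => congrArg zc (K.periodic_map s)
  intro t
  simp only [Dang, rawDang, r, K.periodic_map t, hy.deriv t, hz.deriv t]

lemma wind_add_wind (a b c : ℝ) : K.wind a b + K.wind b c = K.wind a c := by
  rw [wind, wind, wind, ← mul_add, intervalIntegral.integral_add_adjacent_intervals
    (K.continuous_windDensity.intervalIntegrable a b)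
    (K.continuous_windDensity.intervalIntegrable b c)]

lemma wind_add_one (a : ℝ) : K.wind a (a + 1) = K.wind 0 1 := by
  rw [wind, wind, K.periodic_windDensity.intervalIntegral_add_eq a 0, zero_add]

lemma exists_mem_Ico_map_eq {p : Pt} (hp : K.onK p) : ∃ t ∈ Ico (0 : ℝ) 1, K.map t = p := by
  obtain ⟨s, rfl⟩ := hp
  obtain ⟨t, ht, hst⟩ := K.periodic_map.exists_mem_Ico₀ one_pos s
  exact ⟨t, ht, hst.symm⟩

lemma map_param {p : Pt} (hp : K.onK p) : K.map (K.param p) = p := by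
  rw [param, dif_pos (K.exists_mem_Ico_map_eq hp)]
  exact (K.exists_mem_Ico_map_eq hp).choose_spec.2

lemma markInt_add_markInt {p q : Pt} (hp : K.onK p) (hq : K.onK q) (hne : p ≠ q)
    (h : SameFiber p q) : K.markInt p q + K.markInt q p = K.lkL := by
  wlog hlt : K.param p < K.param q generalizing p q
  · have hqp : K.param q < K.param p := by
      refine lt_of_le_of_ne (not_lt.mp hlt) fun hpq => hne ?_
      rw [← K.map_param hp, ← K.map_param hq, hpq]
    rw [add_comm]
    exact this hq hp hne.symm h.symm hqp
  set a := K.param p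
  set b := K.param q
  have hpq : K.param2 p q = (a, b) := by simp [param2, a, b, not_lt.mpr hlt.le]
  have hqp : K.param2 q p = (b, a + 1) := by simp [param2, a, b, hlt]
  rw [← K.map_param hp, ← K.map_param hq] at h
  obtain ⟨n₁, hn₁⟩ := K.exists_int_wind_eq h
  obtain ⟨n₂, hn₂⟩ := K.exists_int_wind_eq (a := b) (b := a + 1)
    (by rw [K.periodic_map a]; exact h.symm)
  rw [markInt, markInt, lkL, hpq, hqp, ← K.wind_add_one a, ← K.wind_add_wind a b (a + 1), hn₁,
    hn₂, ← Int.cast_add, round_intCast, round_intCast, round_intCast]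

lemma mark_swap {p q : Pt} (hp : K.onK p) (hq : K.onK q) (hne : p ≠ q) (h : SameFiber p q) :
    K.mark K.lkL.natAbs q p = (K.lkL.natAbs : ZMod K.lkL.natAbs) - K.mark K.lkL.natAbs p q := by
  have hlk : ((K.lkL : ℤ) : ZMod K.lkL.natAbs) = 0 :=
    (ZMod.intCast_zmod_eq_zero_iff_dvd _ _).mpr Int.natAbs_dvd_self
  rw [mark, mark, eq_sub_of_add_eq' (K.markInt_add_markInt hp hq hne h), Int.cast_sub, hlk,
    ZMod.natCast_self]

end Knot

theorem statement13_general (K : Knot) (m : ℤ) (hlk : K.lkL = m) :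
    ((fun x : Torus3 => (x.1 + ((π : ℝ) : AddCircle (2 * π)), x.2.1, x.2.2)) '' TG K =
        TG K) ∧
      ∀ p q : Pt, K.onK p → K.onK q → p ≠ q → SameFiber p q →
        TGpt q p = (tauAngle p q + ((π : ℝ) : AddCircle (2 * π)), phiAngle p, rhoLine p q) ∧
          K.mark m.natAbs q p = (m.natAbs : ZMod m.natAbs) - K.mark m.natAbs p q := by
  subst hlk
  exact ⟨image_shift_TG K, fun p q hp hq hne h => ⟨h.TGpt_swap hne, K.mark_swap hp hq hne h⟩⟩

/-- For a generic knot `K ⊂ ℝ³ − L`, the trace graph `TG(K) ⊂ S¹_τ × S¹_φ × ℝ⁺_ρ` is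
symmetric under the shift `τ ↦ τ + π`, and under this shift a point with homological
marking `[a] ∈ ℤ_{|m|}` is carried to a point with homological marking
`[|m| − a] ∈ ℤ_{|m|}`, where `m = lk(K,L)`.  (The shift of the point of `TG(K)`
corresponding to an ordered pair `(p,q)` is the point corresponding to the reversed
pair `(q,p)`.) -/
theorem statement13 (K : Knot) (hgen : K.IsGeneric) (m : ℤ) (hlk : K.lkL = m) :
    ((fun x : Torus3 => (x.1 + ((π : ℝ) : AddCircle (2 * π)), x.2.1, x.2.2)) '' TG K =
        TG K) ∧
      ∀ p q : Pt, K.onK p → K.onK q → p ≠ q → SameFiber p q →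
        TGpt q p = (tauAngle p q + ((π : ℝ) : AddCircle (2 * π)), phiAngle p, rhoLine p q) ∧
          K.mark m.natAbs q p = (m.natAbs : ZMod m.natAbs) - K.mark m.natAbs p q :=
  statement13_general K m hlk

end FQS
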